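/- Let E be a connected, countable amplified directed graph and set V₀ := {H(v, 0) : v ∈ E⁰}. Then the smallest equivalence relation on V₀ containing {(H, K) : H, K ∈ V₀, lt₁(K) ⊆ H} is all of V₀ × V₀. -/

import Mathlib

/-- A directed graph: a set of vertices, a set of edges, and range and source maps. -/
structure DirGraph where
  V : Type
  E : Type
  r : E → V
  s : E → V

namespace DirGraph

variable (G : DirGraph)

/-- The skew-product graph `E ×₁ ℤ`. -/
def skew : DirGraph where
  V := G.V × ℤ
  E := G.E × ℤ
  r := fun e => (G.r e.1, e.2 + 1)
  s := fun e => (G.s e.1, e.2)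

/-- `G.PathRel v w n` : there is a path of length `n` from `v` to `w`
(vertices are paths of length `0`). -/
inductive PathRel : G.V → G.V → ℕ → Prop
  | nil (v : G.V) : PathRel v v 0
  | cons (e : G.E) {w : G.V} {n : ℕ} : PathRel (G.r e) w n → PathRel (G.s e) w (n + 1)

/-- A set of vertices is hereditary if it contains the range of every edge whose
source it contains. -/
def Hereditary (H : Set G.V) : Prop := ∀ e : G.E, G.s e ∈ H → G.r e ∈ H

/-- `H(v, n)`: the smallest hereditary subset of `(E ×₁ ℤ)⁰` containing `(v, n)`. -/
def Hgen (v : G.V) (n : ℤ) : Set (G.V × ℤ) :=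
  ⋂₀ {K : Set (G.V × ℤ) | G.skew.Hereditary K ∧ (v, n) ∈ K}

/-- The translation action `lt_k(H) = {(v, n + k) : (v, n) ∈ H}`. -/
def lt (k : ℤ) (H : Set (G.V × ℤ)) : Set (G.V × ℤ) :=
  (fun p : G.V × ℤ => (p.1, p.2 + k)) '' H

/-- The hereditary set `H₀ = {(v, n) : v ∈ E⁰, n ≥ 0}`. -/
def H0 : Set (G.V × ℤ) := {p | 0 ≤ p.2}

/-- A graph is amplified if for all vertices `v, w` the set `vE¹w` of edges from `v`
to `w` is empty or infinite. -/
def Amplified : Prop :=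
  ∀ v w : G.V, {e : G.E | G.s e = v ∧ G.r e = w} = ∅ ∨ {e : G.E | G.s e = v ∧ G.r e = w}.Infinite

/-- A graph is connected if the smallest equivalence relation on the vertices containing
`{(s e, r e) : e ∈ E¹}` is everything. -/
def Connected : Prop :=
  ∀ v w : G.V, Relation.EqvGen (fun a b => ∃ e : G.E, G.s e = a ∧ G.r e = b) v w

/-- `L` has a unique predecessor in the poset of hereditary subsets of `(E ×₁ ℤ)⁰`. -/
def UniquePred (L : Set (G.V × ℤ)) : Prop :=
  ∃ K : Set (G.V × ℤ), G.skew.Hereditary K ∧ K ⊂ L ∧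
    ∀ K' : Set (G.V × ℤ), G.skew.Hereditary K' → K' ⊂ L → K' ⊆ K

/-- `ℋ_vert`: the hereditary subsets of `(E ×₁ ℤ)⁰` having a unique predecessor. -/
def HVert : Set (Set (G.V × ℤ)) := {L | G.skew.Hereditary L ∧ G.UniquePred L}

/-- `V₀ = {H(v, 0) : v ∈ E⁰}`. -/
def V0 : Set (Set (G.V × ℤ)) := {L | ∃ v : G.V, L = G.Hgen v 0}


theorem lt_hereditary (k : ℤ) {H : Set (G.V × ℤ)}
    (hH : G.skew.Hereditary H) : G.skew.Hereditary (G.lt k H) := by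
  rintro ⟨f, m⟩ hs
  obtain ⟨⟨v, n⟩, hvn, heq⟩ := hs
  have h1 : v = G.s f := congrArg Prod.fst heq
  have h2 : n + k = m := congrArg Prod.snd heq
  subst h1
  refine ⟨(G.r f, n + 1), hH (f, n) hvn, ?_⟩
  show ((G.r f : G.V), n + 1 + k) = (G.r f, m + 1)
  rw [Prod.ext_iff]
  exact ⟨rfl, by omega⟩

theorem H0_hereditary : G.skew.Hereditary G.H0 := by
  rintro ⟨f, m⟩ hm
  have : 0 ≤ m := hm
  show 0 ≤ m + 1
  omega

/-- The hereditary subsets of the skew-product graph, as a type. -/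
def HS := {L : Set (G.V × ℤ) // G.skew.Hereditary L}

/-- Translation on hereditary subsets of the skew product. -/
def ltH (k : ℤ) (A : G.HS) : G.HS := ⟨G.lt k A.1, G.lt_hereditary k A.2⟩

/-- `H₀` as an element of `G.HS`. -/
def H0H : G.HS := ⟨G.H0, G.H0_hereditary⟩

/-- The vertex set `Ē⁰` of the graph recovered from `(ℋ(E ×₁ ℤ), ⊆, lt, H₀)`. -/
def Ebar0 : Set (Set (G.V × ℤ)) := {L | L ∈ G.HVert ∧ L ⊆ G.H0 ∧ ¬ L ⊆ G.lt 1 G.H0}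

/-- The graph `Ē` recovered from `(ℋ(E ×₁ ℤ), ⊆, lt, H₀)`. -/
noncomputable def Ebar : DirGraph where
  V := G.Ebar0
  E := {t : Set (G.V × ℤ) × ℕ × Set (G.V × ℤ) //
          t.1 ∈ G.Ebar0 ∧ t.2.2 ∈ G.Ebar0 ∧ G.lt 1 t.2.2 ⊆ t.1}
  s := fun t => ⟨t.1.1, t.2.1⟩
  r := fun t => ⟨t.1.2.2, t.2.2.1⟩

end DirGraph

open DirGraph

theorem Relation.EqvGen.map {α β : Type*} {r : α → α → Prop} {s : β → β → Prop} (f : α → β)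
    (hf : ∀ a b, r a b → s (f a) (f b)) {a b : α} (h : Relation.EqvGen r a b) :
    Relation.EqvGen s (f a) (f b) := by
  induction h with
  | rel x y hxy => exact .rel _ _ (hf x y hxy)
  | refl x => exact .refl _
  | symm x y _ ih => exact .symm _ _ ih
  | trans x y z _ _ ihxy ihyz => exact .trans _ _ _ ihxy ihyz

namespace DirGraph

variable (G : DirGraph)

theorem hereditary_preimage_shift {L : Set (G.V × ℤ)} (hL : G.skew.Hereditary L) (k : ℤ) :
    G.skew.Hereditary ((fun p : G.V × ℤ => (p.1, p.2 + k)) ⁻¹' L) := by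
  rintro ⟨e, n⟩ he
  show (G.r e, n + 1 + k) ∈ L
  rw [add_right_comm]
  exact hL (e, n + k) he

variable {G}

theorem hereditary_Hgen (v : G.V) (n : ℤ) : G.skew.Hereditary (G.Hgen v n) :=
  fun e he _ hK => hK.1 e (he _ hK)

theorem mem_Hgen (v : G.V) (n : ℤ) : (v, n) ∈ G.Hgen v n :=
  fun _ hK => hK.2

theorem Hgen_subset {v : G.V} {n : ℤ} {L : Set (G.V × ℤ)} (hL : G.skew.Hereditary L)
    (hv : (v, n) ∈ L) : G.Hgen v n ⊆ L :=
  fun _ hp => hp L ⟨hL, hv⟩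

theorem lt_Hgen_subset {v : G.V} {n k : ℤ} {L : Set (G.V × ℤ)} (hL : G.skew.Hereditary L)
    (hv : (v, n + k) ∈ L) : G.lt k (G.Hgen v n) ⊆ L :=
  Set.image_subset_iff.mpr (Hgen_subset (G.hereditary_preimage_shift hL k) hv)

theorem lt_Hgen_range_subset_Hgen_source (e : G.E) (n : ℤ) :
    G.lt 1 (G.Hgen (G.r e) n) ⊆ G.Hgen (G.s e) n :=
  lt_Hgen_subset (hereditary_Hgen _ _) (hereditary_Hgen (G.s e) n (e, n) (mem_Hgen _ _))

end DirGraph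

theorem v0_eqvgen_general (G : DirGraph) (hconn : G.Connected) :
    ∀ A B : G.V0, Relation.EqvGen (fun X Y : G.V0 => G.lt 1 Y.1 ⊆ X.1) A B := by
  rintro ⟨_, a, rfl⟩ ⟨_, b, rfl⟩
  refine (hconn a b).map (fun v => (⟨G.Hgen v 0, v, rfl⟩ : G.V0)) ?_
  rintro _ _ ⟨e, rfl, rfl⟩
  exact lt_Hgen_range_subset_Hgen_source e 0

theorem v0_eqvgen (G : DirGraph) [Countable G.V] [Countable G.E]
    (hconn : G.Connected) (hG : G.Amplified) :
    ∀ A B : G.V0, Relation.EqvGen (fun X Y : G.V0 => G.lt 1 Y.1 ⊆ X.1) A B :=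
  v0_eqvgen_general G hconn
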